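/- There exists a universal Martin-Löf test: a Martin-Löf test (U_n) such that every Martin-Löf null subset of Cantor space is contained in ⋂_n U_n. Consequently, the set of computable points of Cantor space is a Martin-Löf null set. -/

import Mathlib

/-!
Read the `e`-th partial recursive function as a candidate uniform sequence of c.e. open sets.
A finite union of cylinders has a dyadic measure computable from the cylinders, so level `m` of a
candidate can be trimmed effectively: enumerate it only as long as the measure enumerated so far
stays `≤ 2⁻ᵐ`. This leaves genuine tests unchanged, and level `n` of the universal test is the
union over `e` of level `n + e + 1` of the trimmed `e`-th candidate, of measure
`≤ ∑ₑ 2⁻⁽ⁿ⁺ᵉ⁺¹⁾ = 2⁻ⁿ`. The same construction, applied to the candidates whose level `m` is the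
cylinder of the first `m` bits output by the `e`-th function, covers every computable point.
-/

open MeasureTheory
open scoped ENNReal

/-- The cylinder set determined by a finite binary string. -/
def cyl (σ : List Bool) : Set (ℕ → Bool) :=
  {x | ∀ i : Fin σ.length, x i = σ.get i}

/-- The effectively open set generated by an enumeration of (codes of) cylinders. -/
def openOf (f : ℕ → Option (List Bool)) : Set (ℕ → Bool) :=
  ⋃ k, (f k).elim ∅ cyl

/-- A Martin-Löf test: a uniformly computable sequence of effectively open sets
`U n = openOf (f n)` with `μ (U n) ≤ 2⁻ⁿ`. -/
def IsMLTest (μ : Measure (ℕ → Bool)) (f : ℕ → ℕ → Option (List Bool)) : Prop :=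
  Computable₂ f ∧ ∀ n, μ (openOf (f n)) ≤ (2⁻¹ : ℝ≥0∞) ^ n

/-- A Schnorr test: a Martin-Löf test whose measures are uniformly computable. -/
def IsSchnorrTest (μ : Measure (ℕ → Bool)) (f : ℕ → ℕ → Option (List Bool)) : Prop :=
  IsMLTest μ f ∧ ∃ h : ℕ → ℕ → ℚ, Computable₂ h ∧
    ∀ n k, |(h n k : ℝ) - (μ (openOf (f n))).toReal| ≤ (1/2 : ℝ) ^ k

def MLNull (μ : Measure (ℕ → Bool)) (E : Set (ℕ → Bool)) : Prop :=
  ∃ f, IsMLTest μ f ∧ E ⊆ ⋂ n, openOf (f n)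

def SchnorrNull (μ : Measure (ℕ → Bool)) (E : Set (ℕ → Bool)) : Prop :=
  ∃ f, IsSchnorrTest μ f ∧ E ⊆ ⋂ n, openOf (f n)

def MLRandom (μ : Measure (ℕ → Bool)) (x : ℕ → Bool) : Prop :=
  ∀ E, MLNull μ E → x ∉ E

def SchnorrRandom (μ : Measure (ℕ → Bool)) (x : ℕ → Bool) : Prop :=
  ∀ E, SchnorrNull μ E → x ∉ E


def initSeg (x : ℕ → Bool) (n : ℕ) : List Bool := (List.range n).map x

@[simp] lemma length_initSeg (x : ℕ → Bool) (n : ℕ) : (initSeg x n).length = n := by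
  simp [initSeg]

lemma initSeg_prefix {x : ℕ → Bool} {m n : ℕ} (h : m ≤ n) : initSeg x m <+: initSeg x n := by
  rw [List.prefix_iff_eq_take]
  simp [initSeg, ← List.map_take, List.take_range, min_eq_left h]

lemma mem_cyl_iff {σ : List Bool} {x : ℕ → Bool} : x ∈ cyl σ ↔ initSeg x σ.length = σ := by
  simp [cyl, initSeg, List.ext_get_iff, Fin.forall_iff]

lemma mem_cyl_initSeg (x : ℕ → Bool) (n : ℕ) : x ∈ cyl (initSeg x n) := by
  rw [mem_cyl_iff, length_initSeg]

lemma cyl_subset_cyl_of_prefix {σ τ : List Bool} (h : σ <+: τ) : cyl τ ⊆ cyl σ := by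
  intro x hx
  rw [mem_cyl_iff] at hx ⊢
  rw [List.prefix_iff_eq_take.1 h, ← hx]
  simp [initSeg, ← List.map_take, List.take_range, h.length_le]

lemma prefix_initSeg_of_mem_cyl {σ : List Bool} {x : ℕ → Bool} {n : ℕ} (hx : x ∈ cyl σ)
    (hn : σ.length ≤ n) : σ <+: initSeg x n :=
  mem_cyl_iff.1 hx ▸ initSeg_prefix hn

lemma disjoint_cyl {σ τ : List Bool} (hlen : σ.length = τ.length) (hne : σ ≠ τ) :
    Disjoint (cyl σ) (cyl τ) :=
  Set.disjoint_left.2 fun x hσ hτ => hne <| by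
    rw [← mem_cyl_iff.1 hσ, ← mem_cyl_iff.1 hτ, hlen]

lemma measurableSet_cyl (σ : List Bool) : MeasurableSet (cyl σ) := by
  have : cyl σ = ⋂ i : Fin σ.length, (fun x : ℕ → Bool => x i) ⁻¹' {σ.get i} := by
    ext x; simp [cyl]
  rw [this]
  exact .iInter fun i => measurable_pi_apply _ (measurableSet_singleton _)

def allStr : ℕ → List (List Bool)
  | 0 => [[]]
  | n + 1 => (allStr n).flatMap fun s => [false :: s, true :: s]

lemma mem_allStr {n : ℕ} {τ : List Bool} : τ ∈ allStr n ↔ τ.length = n := by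
  induction n generalizing τ with
  | zero => simp [allStr]
  | succ n ih =>
    rcases τ with _ | ⟨b, τ⟩
    · simp [allStr]
    · cases b <;> simp [allStr, ih]

lemma nodup_allStr (n : ℕ) : (allStr n).Nodup := by
  induction n with
  | zero => simp [allStr]
  | succ n ih =>
    refine List.nodup_flatMap.2 ⟨fun _ _ => by simp, ih.imp fun hne => ?_⟩
    simp [hne.symm]

def cylCount (L : List (List Bool)) (N : ℕ) : ℕ :=
  ((allStr N).filter fun τ => ∃ σ ∈ L, σ <+: τ).length

lemma biUnion_cyl_eq_filter_allStr {L : List (List Bool)} {N : ℕ}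
    (hL : ∀ σ ∈ L, σ.length ≤ N) :
    ⋃ σ ∈ L, cyl σ = ⋃ τ ∈ (allStr N).filter (fun τ => ∃ σ ∈ L, σ <+: τ), cyl τ := by
  ext x
  simp only [Set.mem_iUnion, List.mem_filter, mem_allStr, decide_eq_true_eq, exists_prop]
  constructor
  · rintro ⟨σ, hσ, hx⟩
    exact ⟨initSeg x N, ⟨length_initSeg x N, σ, hσ, prefix_initSeg_of_mem_cyl hx (hL σ hσ)⟩,
      mem_cyl_initSeg x N⟩
  · rintro ⟨τ, ⟨-, σ, hσ, hστ⟩, hx⟩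
    exact ⟨σ, hσ, cyl_subset_cyl_of_prefix hστ hx⟩

lemma measure_biUnion_cyl {μ : Measure (ℕ → Bool)}
    (hμ : ∀ σ : List Bool, μ (cyl σ) = (2⁻¹ : ℝ≥0∞) ^ σ.length)
    {L : List (List Bool)} {N : ℕ} (hL : ∀ σ ∈ L, σ.length ≤ N) :
    μ (⋃ σ ∈ L, cyl σ) = cylCount L N * (2⁻¹ : ℝ≥0∞) ^ N := by
  set S := (allStr N).filter fun τ => ∃ σ ∈ L, σ <+: τ
  have hS : ∀ τ ∈ S.toFinset, τ.length = N := fun τ hτ =>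
    mem_allStr.1 (List.mem_filter.1 (List.mem_toFinset.1 hτ)).1
  have hdisj : Set.PairwiseDisjoint ↑S.toFinset cyl := fun τ hτ τ' hτ' hne =>
    disjoint_cyl ((hS τ hτ).trans (hS τ' hτ').symm) hne
  have hfin : ⋃ τ ∈ S, cyl τ = ⋃ τ ∈ S.toFinset, cyl τ := by simp
  rw [biUnion_cyl_eq_filter_allStr hL, hfin,
    measure_biUnion_finset hdisj fun τ _ => measurableSet_cyl τ,
    Finset.sum_congr rfl fun τ hτ => (hμ τ).trans (congrArg _ (hS τ hτ)), Finset.sum_const,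
    List.toFinset_card_of_nodup ((nodup_allStr N).filter _), nsmul_eq_mul]
  rfl

lemma natCast_mul_inv_two_pow_le_iff {a N m : ℕ} :
    (a : ℝ≥0∞) * 2⁻¹ ^ N ≤ 2⁻¹ ^ m ↔ a * 2 ^ m ≤ 2 ^ N := by
  rw [← ENNReal.inv_pow, ← ENNReal.inv_pow, ← div_eq_mul_inv,
    ENNReal.div_le_iff (by positivity) (by simp), ← ENNReal.div_eq_inv_mul,
    ENNReal.le_div_iff_mul_le (by simp) (by simp)]
  exact_mod_cast Iff.rfl

/-- A decidable form of `μ (⋃ σ ∈ L, cyl σ) ≤ 2⁻ᵐ`: refine all cylinders to the common length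
`L.flatten.length`, which bounds the length of every member of `L`. -/
def CylUnionLE (L : List (List Bool)) (m : ℕ) : Prop :=
  cylCount L L.flatten.length * 2 ^ m ≤ 2 ^ L.flatten.length

instance : DecidableRel CylUnionLE := fun _ _ => Nat.decLe _ _

lemma cylUnionLE_iff {μ : Measure (ℕ → Bool)}
    (hμ : ∀ σ : List Bool, μ (cyl σ) = (2⁻¹ : ℝ≥0∞) ^ σ.length) {L : List (List Bool)} {m : ℕ} :
    CylUnionLE L m ↔ μ (⋃ σ ∈ L, cyl σ) ≤ (2⁻¹ : ℝ≥0∞) ^ m := by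
  rw [measure_biUnion_cyl hμ fun σ hσ => (List.sublist_flatten_of_mem hσ).length_le,
    natCast_mul_inv_two_pow_le_iff]
  rfl

lemma mem_openOf {f : ℕ → Option (List Bool)} {x : ℕ → Bool} :
    x ∈ openOf f ↔ ∃ σ, (∃ k, f k = some σ) ∧ x ∈ cyl σ := by
  simp only [openOf, Set.mem_iUnion]
  constructor
  · rintro ⟨k, hk⟩
    cases hf : f k with
    | none => simp [hf] at hk
    | some σ => exact ⟨σ, ⟨k, hf⟩, by simpa [hf] using hk⟩
  · rintro ⟨σ, ⟨k, hk⟩, hx⟩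
    exact ⟨k, by simpa [hk] using hx⟩

lemma openOf_congr {f g : ℕ → Option (List Bool)}
    (h : ∀ σ, (∃ k, f k = some σ) ↔ ∃ k, g k = some σ) : openOf f = openOf g := by
  ext x
  simp only [mem_openOf, h]

def enumUpTo (f : ℕ → Option (List Bool)) (k : ℕ) : List (List Bool) :=
  (List.range (k + 1)).filterMap f

lemma mem_enumUpTo {f : ℕ → Option (List Bool)} {k : ℕ} {σ : List Bool} :
    σ ∈ enumUpTo f k ↔ ∃ j ≤ k, f j = some σ := by
  simp [enumUpTo]

lemma biUnion_enumUpTo_subset_openOf (f : ℕ → Option (List Bool)) (k : ℕ) :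
    ⋃ σ ∈ enumUpTo f k, cyl σ ⊆ openOf f :=
  Set.iUnion₂_subset fun σ hσ _ hx =>
    mem_openOf.2 ⟨σ, (mem_enumUpTo.1 hσ).imp fun _ h => h.2, hx⟩

lemma monotone_biUnion_enumUpTo (f : ℕ → Option (List Bool)) :
    Monotone fun k => ⋃ σ ∈ enumUpTo f k, cyl σ := fun _ _ hk =>
  Set.biUnion_subset_biUnion_left fun _ hσ =>
    mem_enumUpTo.2 ((mem_enumUpTo.1 hσ).imp fun _ h => ⟨h.1.trans hk, h.2⟩)

/-- Since the measure enumerated up to stage `k` grows with `k`, this is `f` cut off at the first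
stage where that measure exceeds `2⁻ᵐ`. -/
def trimEnum (f : ℕ → Option (List Bool)) (m k : ℕ) : Option (List Bool) :=
  if CylUnionLE (enumUpTo f k) m then f k else none

section TrimEnum

variable {μ : Measure (ℕ → Bool)} (hμ : ∀ σ : List Bool, μ (cyl σ) = (2⁻¹ : ℝ≥0∞) ^ σ.length)
include hμ

lemma measure_openOf_trimEnum_le (f : ℕ → Option (List Bool)) (m : ℕ) :
    μ (openOf (trimEnum f m)) ≤ (2⁻¹ : ℝ≥0∞) ^ m := by
  set S := fun k => ⋃ σ ∈ enumUpTo f k, cyl σ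
  have hsub : openOf (trimEnum f m) ⊆ ⋃ k : {k // CylUnionLE (enumUpTo f k) m}, S k := by
    intro x hx
    obtain ⟨σ, ⟨k, hk⟩, hx⟩ := mem_openOf.1 hx
    unfold trimEnum at hk
    split_ifs at hk with hok
    exact Set.mem_iUnion.2 ⟨⟨k, hok⟩, Set.mem_biUnion (mem_enumUpTo.2 ⟨k, le_rfl, hk⟩) hx⟩
  have hdir : Directed (· ⊆ ·) fun k : {k // CylUnionLE (enumUpTo f k) m} => S k := by
    intro a b
    rcases le_total a.1 b.1 with h | h
    · exact ⟨b, monotone_biUnion_enumUpTo f h, le_rfl⟩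
    · exact ⟨a, le_rfl, monotone_biUnion_enumUpTo f h⟩
  calc μ (openOf (trimEnum f m)) ≤ μ (⋃ k : {k // CylUnionLE (enumUpTo f k) m}, S k) :=
        measure_mono hsub
    _ = ⨆ k : {k // CylUnionLE (enumUpTo f k) m}, μ (S k) := hdir.measure_iUnion
    _ ≤ (2⁻¹ : ℝ≥0∞) ^ m := iSup_le fun k => (cylUnionLE_iff hμ).1 k.2

lemma trimEnum_eq_self {f : ℕ → Option (List Bool)} {m : ℕ}
    (hf : μ (openOf f) ≤ (2⁻¹ : ℝ≥0∞) ^ m) : trimEnum f m = f := by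
  funext k
  rw [trimEnum, if_pos ((cylUnionLE_iff hμ).2 <|
    (measure_mono (biUnion_enumUpTo_subset_openOf f k)).trans hf)]

end TrimEnum

/-- The shift `n + e + 1` makes level `n` of measure at most `∑ₑ 2⁻⁽ⁿ⁺ᵉ⁺¹⁾ = 2⁻ⁿ`. -/
def mergeTests (F : ℕ → ℕ → ℕ → Option (List Bool)) (n k : ℕ) : Option (List Bool) :=
  F k.unpair.1 (n + k.unpair.1 + 1) k.unpair.2

lemma openOf_mergeTests (F : ℕ → ℕ → ℕ → Option (List Bool)) (n : ℕ) :
    openOf (mergeTests F n) = ⋃ e, openOf (F e (n + e + 1)) := by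
  ext x
  simp only [openOf, mergeTests, Set.mem_iUnion]
  constructor
  · rintro ⟨k, hk⟩
    exact ⟨_, _, hk⟩
  · rintro ⟨e, j, h⟩
    exact ⟨Nat.pair e j, by simpa using h⟩

lemma tsum_inv_two_pow_add_add_one (n : ℕ) :
    ∑' e : ℕ, (2⁻¹ : ℝ≥0∞) ^ (n + e + 1) = (2⁻¹ : ℝ≥0∞) ^ n := by
  simp_rw [add_assoc, pow_add _ n, ENNReal.tsum_mul_left, ENNReal.tsum_geometric_add_one,
    ENNReal.one_sub_inv_two, inv_inv, ENNReal.inv_mul_cancel two_ne_zero ENNReal.ofNat_ne_top,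
    mul_one]

lemma measure_openOf_mergeTests_le {μ : Measure (ℕ → Bool)} {F : ℕ → ℕ → ℕ → Option (List Bool)}
    (hF : ∀ e m, μ (openOf (F e m)) ≤ (2⁻¹ : ℝ≥0∞) ^ m) (n : ℕ) :
    μ (openOf (mergeTests F n)) ≤ (2⁻¹ : ℝ≥0∞) ^ n :=
  calc μ (openOf (mergeTests F n)) ≤ ∑' e, μ (openOf (F e (n + e + 1))) :=
        openOf_mergeTests F n ▸ measure_iUnion_le _
    _ ≤ ∑' e : ℕ, (2⁻¹ : ℝ≥0∞) ^ (n + e + 1) := ENNReal.tsum_le_tsum fun e => hF e _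
    _ = (2⁻¹ : ℝ≥0∞) ^ n := tsum_inv_two_pow_add_add_one n

section Primrec

open Primrec

lemma primrecRel_isPrefix {α : Type*} [Primcodable α] [DecidableEq α] :
    PrimrecRel fun σ τ : List α => σ <+: τ :=
  (Primrec.eq.comp (list_take.comp (list_length.comp fst) snd) fst).of_eq fun _ =>
    eq_comm.trans List.prefix_iff_eq_take.symm

lemma primrec_allStr : Primrec allStr := by
  have h : Primrec (Nat.rec (motive := fun _ => List (List Bool)) [[]]
      fun _ ih => ih.flatMap fun s => [false :: s, true :: s]) :=
    nat_rec₁ _ <| .to₂ <| list_flatMap snd <| .to₂ <|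
      list_cons.comp (list_cons.comp (const false) snd) <|
        list_cons.comp (list_cons.comp (const true) snd) (const [])
  refine h.of_eq fun n => ?_
  induction n with
  | zero => rfl
  | succ n ih => simp only [allStr, ← ih]

lemma primrec₂_cylCount : Primrec₂ cylCount :=
  list_length.comp <|
    (primrecRel_isPrefix.exists_mem_list.swap.listFilter).comp (primrec_allStr.comp snd) fst

lemma primrecRel_cylUnionLE : PrimrecRel CylUnionLE :=
  have hpow : Primrec₂ ((· ^ ·) : ℕ → ℕ → ℕ) := Primrec₂.unpaired'.1 Nat.Primrec.pow
  have hN : Primrec fun p : List (List Bool) × ℕ => p.1.flatten.length :=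
    list_length.comp (list_flatten.comp fst)
  nat_le.comp (nat_mul.comp (primrec₂_cylCount.comp fst hN) (hpow.comp (const 2) snd))
    (hpow.comp (const 2) hN)

lemma primrec₂_trimEnum {α : Type*} [Primcodable α] {f : α → ℕ → Option (List Bool)} {m : α → ℕ}
    (hf : Primrec₂ f) (hm : Primrec m) : Primrec₂ fun a k => trimEnum (f a) (m a) k :=
  Primrec.ite
    (primrecRel_cylUnionLE.comp
      (listFilterMap (list_range.comp (succ.comp snd)) (hf.comp (fst.comp fst) snd))
      (hm.comp fst))
    hf (const none)

lemma primrec₂_mergeTests {F : ℕ → ℕ → ℕ → Option (List Bool)}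
    (hF : Primrec₂ fun (p : ℕ × ℕ) k => F p.1 p.2 k) : Primrec₂ (mergeTests F) :=
  have he : Primrec fun p : ℕ × ℕ => p.2.unpair.1 := fst.comp (unpair.comp snd)
  hF.comp (pair he (nat_add.comp (nat_add.comp fst he) (const 1))) (snd.comp (unpair.comp snd))

end Primrec

def mlTestOf (F : ℕ → ℕ → ℕ → Option (List Bool)) : ℕ → ℕ → Option (List Bool) :=
  mergeTests fun e m => trimEnum (F e m) m

section MLTestOf

variable {μ : Measure (ℕ → Bool)} (hμ : ∀ σ : List Bool, μ (cyl σ) = (2⁻¹ : ℝ≥0∞) ^ σ.length)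
include hμ

theorem isMLTest_mlTestOf {F : ℕ → ℕ → ℕ → Option (List Bool)}
    (hF : Primrec₂ fun (p : ℕ × ℕ) k => F p.1 p.2 k) : IsMLTest μ (mlTestOf F) :=
  ⟨(primrec₂_mergeTests (primrec₂_trimEnum hF Primrec.snd)).to_comp,
    measure_openOf_mergeTests_le fun e m => measure_openOf_trimEnum_le hμ (F e m) m⟩

theorem iInter_openOf_subset_mlTestOf {F : ℕ → ℕ → ℕ → Option (List Bool)} {e : ℕ}
    (he : ∀ m, μ (openOf (F e m)) ≤ (2⁻¹ : ℝ≥0∞) ^ m) :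
    ⋂ m, openOf (F e m) ⊆ ⋂ n, openOf (mlTestOf F n) := fun x hx =>
  Set.mem_iInter.2 fun n => by
    rw [mlTestOf, openOf_mergeTests]
    exact Set.mem_iUnion.2 ⟨e, by rw [trimEnum_eq_self hμ (he _)]; exact Set.mem_iInter.1 hx _⟩

end MLTestOf

open Nat.Partrec Encodable

/-- Entry `⟨j, s⟩` of level `m` of the `e`-th candidate test: the output of the `e`-th partial
recursive function on `⟨m, j⟩` after `s` steps, decoded as an optional cylinder. -/
def codeEnum (e m k : ℕ) : Option (List Bool) :=
  ((Code.evaln k.unpair.2 (Denumerable.ofNat Code e) (Nat.pair m k.unpair.1)).bind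
    (decode (α := Option (List Bool)))).bind id

open Primrec in
lemma primrec₂_codeEnum : Primrec₂ fun (p : ℕ × ℕ) k => codeEnum p.1 p.2 k := by
  have hev : Primrec fun a : (ℕ × ℕ) × ℕ =>
      Code.evaln a.2.unpair.2 (Denumerable.ofNat Code a.1.1) (Nat.pair a.1.2 a.2.unpair.1) :=
    Code.primrec_evaln.comp <| pair (pair (snd.comp (unpair.comp snd))
      ((Primrec.ofNat Code).comp (fst.comp fst)))
      (Primrec₂.natPair.comp (snd.comp fst) (fst.comp (unpair.comp snd)))
  exact option_bind (option_bind hev (Primrec.decode.comp snd).to₂) snd.to₂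

lemma exists_codeEnum_eq {g : ℕ → ℕ → Option (List Bool)} (hg : Computable₂ g) :
    ∃ e, ∀ m, openOf (codeEnum e m) = openOf (g m) := by
  have hpr : Computable fun k : ℕ => encode (g k.unpair.1 k.unpair.2) :=
    Computable.encode.comp <| hg.comp (Primrec.fst.comp Primrec.unpair).to_comp
      (Primrec.snd.comp Primrec.unpair).to_comp
  obtain ⟨c, hc⟩ := Code.exists_code.1 (Partrec.nat_iff.1 hpr)
  have heval : ∀ m j v, v ∈ c.eval (Nat.pair m j) ↔ v = encode (g m j) := by
    simp [hc]
  refine ⟨encode c, fun m => openOf_congr fun σ => ?_⟩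
  simp only [codeEnum, Denumerable.ofNat_encode]
  constructor
  · rintro ⟨k, hk⟩
    obtain ⟨o, ho, rfl⟩ := Option.bind_eq_some_iff.1 hk
    obtain ⟨v, hv, hdec⟩ := Option.bind_eq_some_iff.1 ho
    rw [(heval _ _ _).1 (Code.evaln_sound hv), encodek, Option.some_inj] at hdec
    exact ⟨_, hdec⟩
  · rintro ⟨j, hj⟩
    obtain ⟨s, hs⟩ := Code.evaln_complete.1 ((heval m j _).2 rfl)
    exact ⟨Nat.pair j s, by simp_all⟩

lemma exists_evaln_eq_of_forall_mem_eval {c : Code} {f : ℕ → ℕ} (hf : ∀ i, f i ∈ c.eval i)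
    (m : ℕ) : ∃ s, ∀ i < m, Code.evaln s c i = some (f i) := by
  choose S hS using fun i => Code.evaln_complete.1 (hf i)
  exact ⟨(Finset.range m).sup S, fun i hi =>
    Code.evaln_mono (Finset.le_sup (Finset.mem_range.2 hi)) (hS i)⟩

/-- Entry `s` of level `m` of the `e`-th candidate test: the first `m` outputs of the `e`-th
partial recursive function, read as bits, provided they all converge within `s` steps. -/
def initSegEnum (e m s : ℕ) : Option (List Bool) :=
  if ∀ i < m, (Code.evaln s (Denumerable.ofNat Code e) i).isSome then
    some ((List.range m).map fun i =>
      ((Code.evaln s (Denumerable.ofNat Code e) i).bind decode).getD false)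
  else none

open Primrec in
lemma primrec₂_initSegEnum : Primrec₂ fun (p : ℕ × ℕ) s => initSegEnum p.1 p.2 s := by
  have hev : Primrec fun q : ((ℕ × ℕ) × ℕ) × ℕ =>
      Code.evaln q.1.2 (Denumerable.ofNat Code q.1.1.1) q.2 :=
    Code.primrec_evaln.comp <|
      pair (pair (snd.comp fst) ((Primrec.ofNat Code).comp (fst.comp (fst.comp fst)))) snd
  have hconv : PrimrecRel fun i (a : (ℕ × ℕ) × ℕ) =>
      (Code.evaln a.2 (Denumerable.ofNat Code a.1.1) i).isSome :=
    (Primrec.eq.comp (option_isSome.comp (hev.comp (pair snd fst))) (const true)).of_eq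
      fun _ => Iff.rfl
  have hall : PrimrecPred fun a : (ℕ × ℕ) × ℕ =>
      ∀ i < a.1.2, (Code.evaln a.2 (Denumerable.ofNat Code a.1.1) i).isSome :=
    (hconv.forall_mem_list.comp (list_range.comp (snd.comp fst)) Primrec.id).of_eq
      fun _ => by simp only [List.mem_range, id]
  exact Primrec.ite hall
    (option_some.comp <| list_map (list_range.comp (snd.comp fst)) <|
      option_getD.comp (option_bind hev (Primrec.decode.comp snd).to₂) (const false))
    (const none)

lemma exists_initSegEnum_eq {x : ℕ → Bool} (hx : Computable x) :
    ∃ e, ∀ m, openOf (initSegEnum e m) = cyl (initSeg x m) := by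
  obtain ⟨c, hc⟩ := Code.exists_code.1 (Partrec.nat_iff.1 (Computable.encode.comp hx))
  have heval : ∀ i, encode (x i) ∈ c.eval i := by simp [hc]
  have hbit : ∀ s i, (Code.evaln s c i).isSome →
      ((Code.evaln s c i).bind decode).getD false = x i := by
    intro s i hi
    obtain ⟨v, hv⟩ := Option.isSome_iff_exists.1 hi
    have : v = encode (x i) := by simpa [hc] using Code.evaln_sound hv
    simp [hv, this]
  refine ⟨encode c, fun m => Set.ext fun y => ?_⟩
  simp only [mem_openOf, initSegEnum, Denumerable.ofNat_encode]
  constructor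
  · rintro ⟨σ, ⟨s, hs⟩, hy⟩
    split_ifs at hs with hconv
    rw [← Option.some_inj.1 hs] at hy
    convert hy using 2
    exact List.map_congr_left fun i hi => (hbit s i (hconv i (List.mem_range.1 hi))).symm
  · intro hy
    obtain ⟨s, hs⟩ := exists_evaln_eq_of_forall_mem_eval heval m
    refine ⟨_, ⟨s, if_pos fun i hi => by simp [hs i hi]⟩, ?_⟩
    convert hy using 2
    exact List.map_congr_left fun i hi => hbit s i (by simp [hs i (List.mem_range.1 hi)])

/-- There is a universal Martin-Löf test: one whose intersection contains every
Martin-Löf null set.  Consequently, the set of computable points of Cantor space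
is a Martin-Löf null set. -/
theorem exists_universal_mlTest
    (μ : Measure (ℕ → Bool))
    (hμ : ∀ σ : List Bool, μ (cyl σ) = (2⁻¹ : ℝ≥0∞) ^ σ.length) :
    ∃ f : ℕ → ℕ → Option (List Bool), IsMLTest μ f ∧
      (∀ E, MLNull μ E → E ⊆ ⋂ n, openOf (f n)) ∧
      MLNull μ {x | Computable x} := by
  refine ⟨mlTestOf codeEnum, isMLTest_mlTestOf hμ primrec₂_codeEnum, ?_,
    mlTestOf initSegEnum, isMLTest_mlTestOf hμ primrec₂_initSegEnum, ?_⟩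
  · rintro E ⟨g, ⟨hg, hgμ⟩, hE⟩
    obtain ⟨e, he⟩ := exists_codeEnum_eq hg
    simp only [← he] at hgμ hE
    exact hE.trans (iInter_openOf_subset_mlTestOf hμ hgμ)
  · intro x hx
    obtain ⟨e, he⟩ := exists_initSegEnum_eq hx
    have hμe : ∀ m, μ (openOf (initSegEnum e m)) ≤ (2⁻¹ : ℝ≥0∞) ^ m := fun m => by
      rw [he, hμ, length_initSeg]
    exact iInter_openOf_subset_mlTestOf hμ hμe <|
      Set.mem_iInter.2 fun m => he m ▸ mem_cyl_initSeg x m
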